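/- arXiv:1711.02039 — 4 statements merged into one kernel-verified Lean document; each statement's English description precedes it below -/
import Mathlib

section
/- If P is an orthogonal projection on a complex Hilbert space and Σ is a bounded self-adjoint operator with -P ≤ Σ ≤ P and Σ = PΣP, then for any 0 ≤ a < 1/4 the operator inequality 2^(1-4a) P ≤ (P + Σ)^(1-4a) + (P - Σ)^(1-4a) ≤ 2P holds (functional calculus taken on the range of P with convention 0^c = 0). -/
/-!
Write `c = 1 - 4a ∈ (0, 1]`, `A = P + Σ`, `B = P - Σ`. Both are positive with `A + B = 2P ≤ 2`,
so their spectra lie in `[0, 2]`, where `x ^ c ≥ 2 ^ (c - 1) x`; this gives the lower bound.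
For the upper bound use Bernoulli's `x ^ c ≤ (1 - c) + c x`. Since `g x = x ^ c - c x` vanishes
at `0`, `g A` lies in the closed star subalgebra generated by `A`, hence in the corner `P 𝒜 P`,
so `g A = P (g A) P ≤ (1 - c) P`. Thus `A ^ c + B ^ c ≤ 2 (1 - c) P + c (A + B) = 2P`.
-/

namespace NonUnitalStarSubalgebra

variable (R : Type*) {A : Type*} [CommSemiring R] [NonUnitalSemiring A] [StarRing A]
  [Module R A] [IsScalarTower R A A] [SMulCommClass R A A]

def corner {p : A} (hp : IsSelfAdjoint p) : NonUnitalStarSubalgebra R A where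
  carrier := {x | p * x = x ∧ x * p = x}
  add_mem' := by
    rintro x y ⟨hx₁, hx₂⟩ ⟨hy₁, hy₂⟩
    exact ⟨by rw [mul_add, hx₁, hy₁], by rw [add_mul, hx₂, hy₂]⟩
  zero_mem' := ⟨mul_zero p, zero_mul p⟩
  mul_mem' := by
    rintro x y ⟨hx₁, -⟩ ⟨-, hy₂⟩
    exact ⟨by rw [← mul_assoc, hx₁], by rw [mul_assoc, hy₂]⟩
  smul_mem' := by
    rintro r x ⟨hx₁, hx₂⟩
    exact ⟨by rw [mul_smul_comm, hx₁], by rw [smul_mul_assoc, hx₂]⟩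
  star_mem' := by
    rintro x ⟨hx₁, hx₂⟩
    exact ⟨by rw [← hp.star_eq, ← star_mul, hx₂], by rw [← hp.star_eq, ← star_mul, hx₁]⟩

variable {R}

lemma mem_corner {p : A} (hp : IsSelfAdjoint p) {x : A} :
    x ∈ corner R hp ↔ p * x = x ∧ x * p = x := Iff.rfl

lemma mem_corner_of_mul_mul_eq {p x : A} (hp : IsStarProjection p) (hx : p * x * p = x) :
    x ∈ corner R hp.isSelfAdjoint := by
  rw [mem_corner]
  constructor <;> conv_lhs => rw [← hx]
  · rw [← mul_assoc, ← mul_assoc, hp.isIdempotentElem.eq, hx]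
  · rw [mul_assoc, hp.isIdempotentElem.eq, hx]

lemma isClosed_corner [TopologicalSpace A] [IsTopologicalSemiring A] [T2Space A]
    {p : A} (hp : IsSelfAdjoint p) : IsClosed (corner R hp : Set A) :=
  (isClosed_eq (continuous_const_mul p) continuous_id).inter
    (isClosed_eq (continuous_mul_const p) continuous_id)

end NonUnitalStarSubalgebra

namespace Real

lemma rpow_le_mul_add_one_sub {x c : ℝ} (hx : 0 ≤ x) (hc₀ : 0 ≤ c) (hc₁ : c ≤ 1) :
    x ^ c ≤ c * x + (1 - c) := by
  simpa using geom_mean_le_arith_mean2_weighted hc₀ (sub_nonneg.2 hc₁) hx zero_le_one (by ring)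

lemma rpow_sub_one_mul_le_rpow {x t c : ℝ} (hx : 0 ≤ x) (hxt : x ≤ t) (hc : c ≤ 1) :
    t ^ (c - 1) * x ≤ x ^ c := by
  rcases hx.eq_or_lt with rfl | hx
  · simpa using rpow_nonneg le_rfl c
  calc t ^ (c - 1) * x ≤ x ^ (c - 1) * x :=
        mul_le_mul_of_nonneg_right (rpow_le_rpow_of_nonpos hx hxt (by linarith)) hx.le
    _ = x ^ c := by rw [rpow_sub_one hx.ne', div_mul_cancel₀ _ hx.ne']

end Real

section CStarAlgebra

open NonUnitalStarAlgebra NonUnitalStarSubalgebra Set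

variable {A : Type*} [CStarAlgebra A]

lemma cfc_mem_corner {p a : A} (hp : IsSelfAdjoint p) (ha : a ∈ corner ℝ hp) {f : ℝ → ℝ}
    (hf : Continuous f) (hf0 : f 0 = 0) : cfc f a ∈ corner ℝ hp := by
  rw [← cfcₙ_eq_cfc hf.continuousOn hf0]
  exact elemental.le_of_mem (isClosed_corner hp) ha (cfcₙ_mem_elemental f a)

variable [PartialOrder A] [StarOrderedRing A]

lemma cfc_le_smul_of_mem_corner {p a : A} (hp : IsStarProjection p)
    (ha : a ∈ corner ℝ hp.isSelfAdjoint) (ha' : IsSelfAdjoint a) {f : ℝ → ℝ} (hf : Continuous f)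
    (hf0 : f 0 = 0) {r : ℝ} (hfr : ∀ x ∈ spectrum ℝ a, f x ≤ r) : cfc f a ≤ r • p := by
  obtain ⟨hpf, hfp⟩ := cfc_mem_corner hp.isSelfAdjoint ha hf hf0
  calc cfc f a = p * cfc f a * p := by rw [hpf, hfp]
    _ ≤ p * algebraMap ℝ A r * p :=
      hp.isSelfAdjoint.conjugate_le_conjugate (cfc_le_algebraMap f r a hfr)
    _ = r • p := by
      rw [Algebra.algebraMap_eq_smul_one, mul_smul_one, smul_mul_assoc, hp.isIdempotentElem.eq]

lemma spectrum_subset_Icc_of_le_smul {p a : A} (hp : IsStarProjection p) (ha : 0 ≤ a) {t : ℝ}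
    (ht : 0 ≤ t) (hap : a ≤ t • p) : spectrum ℝ a ⊆ Icc 0 t := by
  have hat : a ≤ algebraMap ℝ A t := by
    rw [Algebra.algebraMap_eq_smul_one]
    exact hap.trans (smul_le_smul_of_nonneg_left hp.le_one ht)
  exact fun x hx ↦ ⟨spectrum_nonneg_of_nonneg ha hx,
    (le_algebraMap_iff_spectrum_le (ha := ha.isSelfAdjoint)).mp hat x hx⟩

lemma rpow_sub_one_smul_le_cfc_rpow {a : A} (ha : IsSelfAdjoint a) {t c : ℝ}
    (hspec : spectrum ℝ a ⊆ Icc 0 t) (hc₀ : 0 ≤ c) (hc₁ : c ≤ 1) :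
    t ^ (c - 1) • a ≤ cfc (fun x : ℝ ↦ x ^ c) a := by
  rw [← cfc_const_mul_id _ a]
  exact cfc_mono (fun x hx ↦ Real.rpow_sub_one_mul_le_rpow (hspec hx).1 (hspec hx).2 hc₁)
    (by fun_prop) (Real.continuous_rpow_const hc₀).continuousOn

lemma cfc_rpow_le_of_mem_corner {p a : A} (hp : IsStarProjection p)
    (ha : a ∈ corner ℝ hp.isSelfAdjoint) (ha₀ : 0 ≤ a) {c : ℝ} (hc₀ : 0 < c) (hc₁ : c ≤ 1) :
    cfc (fun x : ℝ ↦ x ^ c) a ≤ (1 - c) • p + c • a := by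
  have hcont : Continuous (· ^ c : ℝ → ℝ) := Real.continuous_rpow_const hc₀.le
  have h := cfc_le_smul_of_mem_corner hp ha ha₀.isSelfAdjoint (f := fun x ↦ x ^ c - c * x)
    (by fun_prop) (by simp [Real.zero_rpow hc₀.ne']) (r := 1 - c) fun x hx ↦ by
      linarith [Real.rpow_le_mul_add_one_sub (spectrum_nonneg_of_nonneg ha₀ hx) hc₀.le hc₁]
  rwa [cfc_sub _ _ a hcont.continuousOn, cfc_const_mul_id c a ha₀.isSelfAdjoint,
    sub_le_iff_le_add] at h

theorem two_rpow_smul_le_cfc_rpow_add_cfc_rpow {p s : A} (hp : IsStarProjection p)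
    (hadd : 0 ≤ p + s) (hsub : 0 ≤ p - s) {c : ℝ} (hc₀ : 0 ≤ c) (hc₁ : c ≤ 1) :
    (2 : ℝ) ^ c • p ≤ cfc (fun x : ℝ ↦ x ^ c) (p + s) + cfc (fun x : ℝ ↦ x ^ c) (p - s) := by
  have hsum : p + s + (p - s) = (2 : ℝ) • p := by rw [two_smul]; abel
  have hspec_add : spectrum ℝ (p + s) ⊆ Icc 0 2 :=
    spectrum_subset_Icc_of_le_smul hp hadd zero_le_two (hsum ▸ le_add_of_nonneg_right hsub)
  have hspec_sub : spectrum ℝ (p - s) ⊆ Icc 0 2 :=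
    spectrum_subset_Icc_of_le_smul hp hsub zero_le_two (hsum ▸ le_add_of_nonneg_left hadd)
  calc (2 : ℝ) ^ c • p = (2 : ℝ) ^ (c - 1) • (p + s) + (2 : ℝ) ^ (c - 1) • (p - s) := by
        rw [← smul_add, hsum, smul_smul, Real.rpow_sub_one two_ne_zero,
          div_mul_cancel₀ _ two_ne_zero]
    _ ≤ _ := add_le_add (rpow_sub_one_smul_le_cfc_rpow hadd.isSelfAdjoint hspec_add hc₀ hc₁)
        (rpow_sub_one_smul_le_cfc_rpow hsub.isSelfAdjoint hspec_sub hc₀ hc₁)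

theorem cfc_rpow_add_cfc_rpow_le_two_smul {p s : A} (hp : IsStarProjection p)
    (hps : p * s * p = s) (hadd : 0 ≤ p + s) (hsub : 0 ≤ p - s) {c : ℝ} (hc₀ : 0 < c)
    (hc₁ : c ≤ 1) :
    cfc (fun x : ℝ ↦ x ^ c) (p + s) + cfc (fun x : ℝ ↦ x ^ c) (p - s) ≤ (2 : ℝ) • p := by
  have hp_mem : p ∈ corner ℝ hp.isSelfAdjoint :=
    mem_corner_of_mul_mul_eq hp (by rw [hp.isIdempotentElem.eq, hp.isIdempotentElem.eq])
  have hs_mem : s ∈ corner ℝ hp.isSelfAdjoint := mem_corner_of_mul_mul_eq hp hps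
  calc _ ≤ ((1 - c) • p + c • (p + s)) + ((1 - c) • p + c • (p - s)) :=
        add_le_add (cfc_rpow_le_of_mem_corner hp (add_mem hp_mem hs_mem) hadd hc₀ hc₁)
          (cfc_rpow_le_of_mem_corner hp (sub_mem hp_mem hs_mem) hsub hc₀ hc₁)
    _ = (2 : ℝ) • p := by module

end CStarAlgebra

theorem stmt0_general {H : Type*} [NormedAddCommGroup H] [InnerProductSpace ℂ H] [CompleteSpace H]
    (P Sg : H →L[ℂ] H) (hPproj : IsIdempotentElem P) (hPsa : IsSelfAdjoint P)
    (hpos : (P + Sg).IsPositive) (hpos' : (P - Sg).IsPositive)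
    (hloc : P * Sg * P = Sg) (a : ℝ) (ha : 0 ≤ a) (ha' : a < 1/4) :
    (((2:ℝ) ^ (1 - 4*a)) • P ≤
        cfc (fun x : ℝ => x ^ (1 - 4*a)) (P + Sg) + cfc (fun x : ℝ => x ^ (1 - 4*a)) (P - Sg))
    ∧ (cfc (fun x : ℝ => x ^ (1 - 4*a)) (P + Sg) + cfc (fun x : ℝ => x ^ (1 - 4*a)) (P - Sg)
        ≤ (2:ℝ) • P) := by
  have hP : IsStarProjection P := ⟨hPproj, hPsa⟩
  have hadd : 0 ≤ P + Sg := (ContinuousLinearMap.nonneg_iff_isPositive _).mpr hpos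
  have hsub : 0 ≤ P - Sg := (ContinuousLinearMap.nonneg_iff_isPositive _).mpr hpos'
  exact ⟨two_rpow_smul_le_cfc_rpow_add_cfc_rpow hP hadd hsub (by linarith) (by linarith),
    cfc_rpow_add_cfc_rpow_le_two_smul hP hloc hadd hsub (by linarith) (by linarith)⟩

/-- If `P` is an orthogonal projection on a complex Hilbert space and `Sg` is a
bounded self-adjoint operator with `-P ≤ Sg ≤ P` and `Sg = P Sg P`, then for any `0 ≤ a < 1/4`
the operator inequality `2^(1-4a) P ≤ (P + Sg)^(1-4a) + (P - Sg)^(1-4a) ≤ 2 P` holds, powers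
taken via (real) continuous functional calculus (with `0^c = 0` since `1 - 4a > 0`). -/
theorem stmt0 {H : Type*} [NormedAddCommGroup H] [InnerProductSpace ℂ H] [CompleteSpace H]
    (P Sg : H →L[ℂ] H) (hPproj : IsIdempotentElem P) (hPsa : IsSelfAdjoint P)
    (hSgsa : IsSelfAdjoint Sg) (hpos : (P + Sg).IsPositive) (hpos' : (P - Sg).IsPositive)
    (hloc : P * Sg * P = Sg) (a : ℝ) (ha : 0 ≤ a) (ha' : a < 1/4) :
    (((2:ℝ) ^ (1 - 4*a)) • P ≤
        cfc (fun x : ℝ => x ^ (1 - 4*a)) (P + Sg) + cfc (fun x : ℝ => x ^ (1 - 4*a)) (P - Sg))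
    ∧ (cfc (fun x : ℝ => x ^ (1 - 4*a)) (P + Sg) + cfc (fun x : ℝ => x ^ (1 - 4*a)) (P - Sg)
        ≤ (2:ℝ) • P) :=
  stmt0_general P Sg hPproj hPsa hpos hpos' hloc a ha ha'
end

section
/- Let S and M be (possibly unbounded) self-adjoint positive operators on Hilbert spaces H₁ and H₂ respectively, and U : H₂ → H₁ a bounded operator with dense range such that ‖S^(1/2) U x‖ = ‖M^(1/2) x‖ for all x in a core of M with Ux in the domain of S^(1/2). If U is unitary onto its closure of range, then U* S^(1/2) U = M^(1/2), and consequently f(S) ∘ U = U ∘ f(M) on suitable domains for every continuous function f : [0,∞) → ℝ. -/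
open ContinuousLinearMap

section Aux

variable {H : Type*} [NormedAddCommGroup H] [InnerProductSpace ℂ H] [CompleteSpace H]

local notation "⟪" x ", " y "⟫" => @inner ℂ _ _ x y

lemma aux_spectrum_nonneg (A : H →L[ℂ] H) (hA : A.IsPositive) :
    ∀ x ∈ spectrum ℝ A, (0 : ℝ) ≤ x := by
  have := hA.spectrumRestricts
  rwa [SpectrumRestricts.nnreal_iff] at this

lemma aux_sqrt_mul_sqrt (A : H →L[ℂ] H) (hA : A.IsPositive) :
    cfc Real.sqrt A * cfc Real.sqrt A = A := by
  rw [← cfc_mul Real.sqrt Real.sqrt A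
    (Real.continuous_sqrt.continuousOn) (Real.continuous_sqrt.continuousOn)]
  have h3 : cfc (fun x : ℝ => Real.sqrt x * Real.sqrt x) A = cfc (fun x : ℝ => x) A :=
    cfc_congr (fun x hx => Real.mul_self_sqrt (aux_spectrum_nonneg A hA x hx))
  rw [h3]
  exact cfc_id' ℝ A hA.isSelfAdjoint

lemma aux_form (A : H →L[ℂ] H) (hA : A.IsPositive) (v : H) :
    ⟪A v, v⟫ = (‖cfc Real.sqrt A v‖ : ℂ) ^ 2 := by
  set T := cfc Real.sqrt A with hT
  have hTsa : IsSelfAdjoint T := cfc_predicate Real.sqrt A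
  have hAv : A v = T (T v) := by
    conv_lhs => rw [← aux_sqrt_mul_sqrt A hA]
    rfl
  rw [hAv]
  have h2 := ContinuousLinearMap.adjoint_inner_right T (T v) v
  rw [hTsa.adjoint_eq] at h2
  rw [← h2, inner_self_eq_norm_sq_to_K]
  norm_cast

end Aux

/-- Let `S`, `M` be positive (self-adjoint) operators on Hilbert spaces `H₁`, `H₂`
and `U : H₂ → H₁` a bounded operator with dense range which is unitary onto (the closure of) its
range (i.e. an isometry), such that `‖S^(1/2) U x‖ = ‖M^(1/2) x‖` for all `x`. Then
`U* S^(1/2) U = M^(1/2)`, and consequently `f(S) ∘ U = U ∘ f(M)` for every continuous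
`f : [0,∞) → ℝ`. -/
theorem stmt3 {H₁ H₂ : Type*}
    [NormedAddCommGroup H₁] [InnerProductSpace ℂ H₁] [CompleteSpace H₁]
    [NormedAddCommGroup H₂] [InnerProductSpace ℂ H₂] [CompleteSpace H₂]
    (S : H₁ →L[ℂ] H₁) (M : H₂ →L[ℂ] H₂) (hS : S.IsPositive) (hM : M.IsPositive)
    (U : H₂ →L[ℂ] H₁) (hUiso : ∀ x, ‖U x‖ = ‖x‖) (hUdense : DenseRange U)
    (hintertwine : ∀ x, ‖cfc Real.sqrt S (U x)‖ = ‖cfc Real.sqrt M x‖) :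
    (ContinuousLinearMap.adjoint U).comp ((cfc Real.sqrt S).comp U) = cfc Real.sqrt M ∧
    ∀ f : ℝ → ℝ, ContinuousOn f (Set.Ici 0) →
      (cfc f S).comp U = U.comp (cfc f M) := by
  -- U as a linear isometry
  let Uli : H₂ →ₗᵢ[ℂ] H₁ := ⟨(U : H₂ →ₗ[ℂ] H₁), hUiso⟩
  have hinner : ∀ x y : H₂, @inner ℂ _ _ (U x) (U y) = @inner ℂ _ _ x y :=
    fun x y => Uli.inner_map_map x y
  -- U* U = 1
  have hUadjU : ∀ x : H₂, ContinuousLinearMap.adjoint U (U x) = x := by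
    intro x
    apply ext_inner_right ℂ
    intro y
    rw [ContinuousLinearMap.adjoint_inner_left]
    exact hinner x y
  -- U is surjective
  have hsurj : Function.Surjective U := by
    have hclosed : IsClosed (Set.range U) :=
      Uli.isometry.isClosedEmbedding.isClosed_range
    intro x
    have : x ∈ closure (Set.range U) := hUdense x
    rwa [hclosed.closure_eq] at this
  -- U U* = 1
  have hUUadj : ∀ x : H₁, U (ContinuousLinearMap.adjoint U x) = x := by
    intro x
    obtain ⟨y, rfl⟩ := hsurj x
    rw [hUadjU y]
  -- conjugation star algebra homomorphism
  let Φ : (H₁ →L[ℂ] H₁) →⋆ₐ[ℂ] (H₂ →L[ℂ] H₂) :=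
    { toFun := fun a => (ContinuousLinearMap.adjoint U).comp (a.comp U)
      map_one' := by
        ext x
        simp only [ContinuousLinearMap.coe_comp', Function.comp_apply,
          ContinuousLinearMap.one_apply]
        exact hUadjU x
      map_mul' := fun a b => by
        ext x
        simp only [ContinuousLinearMap.coe_comp', Function.comp_apply,
          ContinuousLinearMap.mul_apply]
        rw [hUUadj (b (U x))]
      map_zero' := by ext x; simp
      map_add' := fun a b => by ext x; simp
      commutes' := fun c => by
        ext x
        simp only [Algebra.algebraMap_eq_smul_one, ContinuousLinearMap.coe_comp',
          Function.comp_apply, ContinuousLinearMap.smul_apply, ContinuousLinearMap.one_apply,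
          map_smul]
        rw [hUadjU x]
      map_star' := fun a => by
        simp only [star_eq_adjoint, ContinuousLinearMap.adjoint_comp, adjoint_adjoint]
        rw [ContinuousLinearMap.comp_assoc] }
  have hΦdef : ∀ a : H₁ →L[ℂ] H₁,
      Φ a = (ContinuousLinearMap.adjoint U).comp (a.comp U) := fun _ => rfl
  have hΦcont : Continuous Φ := by
    have : Continuous fun a : H₁ →L[ℂ] H₁ =>
        (ContinuousLinearMap.adjoint U).comp (a.comp U) :=
      ((ContinuousLinearMap.compL ℂ H₂ H₁ H₂ (ContinuousLinearMap.adjoint U)).comp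
        ((ContinuousLinearMap.compL ℂ H₂ H₁ H₁).flip U)).continuous
    exact this
  -- key: Φ S = M
  have hkey : Φ S = M := by
    have h := (ext_inner_map ((Φ S : H₂ →L[ℂ] H₂) : H₂ →ₗ[ℂ] H₂)
      ((M : H₂ →L[ℂ] H₂) : H₂ →ₗ[ℂ] H₂)).mp ?_
    · exact ContinuousLinearMap.coe_injective h
    · intro x
      show @inner ℂ _ _ (Φ S x) x = @inner ℂ _ _ (M x) x
      have h1 : @inner ℂ _ _ (Φ S x) x = @inner ℂ _ _ (S (U x)) (U x) := by
        rw [hΦdef]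
        simp only [ContinuousLinearMap.coe_comp', Function.comp_apply]
        rw [ContinuousLinearMap.adjoint_inner_left]
      rw [h1, aux_form S hS (U x), aux_form M hM x, hintertwine x]
  -- Φ maps cfc f S to cfc f M
  have hmap : ∀ f : ℝ → ℝ, ContinuousOn f (spectrum ℝ S) →
      (ContinuousLinearMap.adjoint U).comp ((cfc f S).comp U) = cfc f M := by
    intro f hf
    have hΦS : IsSelfAdjoint (Φ S) := hkey ▸ hM.isSelfAdjoint
    have h := StarAlgHomClass.map_cfc Φ f S hf hΦcont hS.isSelfAdjoint hΦS
    rw [hkey] at h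
    rw [← hΦdef]
    exact h
  have hspecS : spectrum ℝ S ⊆ Set.Ici 0 := fun x hx => aux_spectrum_nonneg S hS x hx
  constructor
  · exact hmap Real.sqrt Real.continuous_sqrt.continuousOn
  · intro f hf
    have h := hmap f (hf.mono hspecS)
    calc (cfc f S).comp U
        = U.comp ((ContinuousLinearMap.adjoint U).comp ((cfc f S).comp U)) := by
          ext x
          simp only [ContinuousLinearMap.coe_comp', Function.comp_apply]
          rw [hUUadj]
      _ = U.comp (cfc f M) := by rw [h]
end

section
/- In the Clifford algebra of the Minkowski quadratic form of signature (1, 2) (i.e. D = 3 spacetime dimensions, generators γ⁰, γ¹, γ² with (γ^a)² = ±1 according to η = diag(1,-1,-1) and anticommuting), there is no invertible element U of the Clifford algebra satisfying γ^a U γ^a = -U (no sum) for all a = 0, 1, 2. -/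
/-!
In three dimensions the pseudoscalar `ω = γ⁰γ¹γ²` commutes with each generator (moving `γᵃ`
across `ω` costs two sign changes), so it is central. Since `(γ⁰)² = 1` and `(γ¹)² = (γ²)² = -1`,
the relations `γᵃ U γᵃ = -U` say that `U` anticommutes with `γ⁰` and commutes with `γ¹, γ²`, hence
anticommutes with `ω`. Together, `2 ωU = 0`; but `ωU` is a unit.
-/

open CliffordAlgebra

section AnticommutingTriple

variable {A : Type*} [Ring A] {a b c : A}

theorem commute_mul_mul_left_of_anticomm (hba : b * a = -(a * b)) (hca : c * a = -(a * c)) :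
    Commute (a * b * c) a :=
  calc a * b * c * a = a * b * (c * a) := by noncomm_ring
    _ = -(a * (b * a) * c) := by rw [hca]; noncomm_ring
    _ = a * (a * b * c) := by rw [hba]; noncomm_ring

theorem commute_mul_mul_middle_of_anticomm (hba : b * a = -(a * b)) (hcb : c * b = -(b * c)) :
    Commute (a * b * c) b :=
  calc a * b * c * b = -(a * b * b * c) := by rw [mul_assoc (a * b), hcb]; noncomm_ring
    _ = b * a * b * c := by rw [hba]; noncomm_ring
    _ = b * (a * b * c) := by noncomm_ring

theorem commute_mul_mul_right_of_anticomm (hca : c * a = -(a * c)) (hcb : c * b = -(b * c)) :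
    Commute (a * b * c) c :=
  calc a * b * c * c = -(a * (c * b) * c) := by rw [hcb]; noncomm_ring
    _ = c * a * b * c := by rw [hca]; noncomm_ring
    _ = c * (a * b * c) := by noncomm_ring

theorem mul_mul_mul_eq_neg_of_anticomm_of_commute {u : A} (ha : a * u = -(u * a))
    (hb : Commute b u) (hc : Commute c u) : a * b * c * u = -(u * (a * b * c)) :=
  calc a * b * c * u = a * (b * (c * u)) := by noncomm_ring
    _ = a * u * (b * c) := by rw [hc.eq, ← mul_assoc b, hb.eq]; noncomm_ring
    _ = -(u * (a * b * c)) := by rw [ha]; noncomm_ring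

end AnticommutingTriple

section SandwichByInvolution

variable {A : Type*} [Ring A] {g u : A}

theorem mul_eq_neg_mul_of_mul_mul_eq_neg (hg : g * g = 1) (h : g * u * g = -u) :
    g * u = -(u * g) :=
  calc g * u = g * u * g * g := by rw [mul_assoc (g * u), hg, mul_one]
    _ = -(u * g) := by rw [h, neg_mul]

theorem commute_of_mul_mul_eq_neg (hg : g * g = -1) (h : g * u * g = -u) : Commute g u :=
  calc g * u = -(g * u * g * g) := by rw [mul_assoc (g * u), hg, mul_neg_one, neg_neg]
    _ = u * g := by rw [h, neg_mul, neg_neg]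

end SandwichByInvolution

theorem eq_zero_of_commute_of_mul_eq_neg {R A : Type*} [CommRing R] [Invertible (2 : R)] [Ring A]
    [Algebra R A] {x y : A} (hc : Commute x y) (h : x * y = -(y * x)) : x * y = 0 := by
  have h2 : (2 : R) • (x * y) = 0 := by
    rw [two_smul]; nth_rewrite 2 [hc.eq]; rw [h, neg_add_cancel]
  simpa using congrArg ((⅟2 : R) • ·) h2

namespace CliffordAlgebra

variable {R M : Type*} [CommRing R] [AddCommGroup M] [Module R M] {Q : QuadraticForm R M}

theorem commute_of_forall_commute_ι {s : Set M} (hs : Submodule.span R s = ⊤)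
    {x : CliffordAlgebra Q} (hx : ∀ m ∈ s, Commute x (ι Q m)) (y : CliffordAlgebra Q) :
    Commute x y := by
  have hι (m : M) : Commute x (ι Q m) := by
    induction hs ▸ Submodule.mem_top (x := m) using Submodule.span_induction with
    | mem m hm => exact hx m hm
    | zero => simp
    | add m n _ _ hm hn => simpa using hm.add_right hn
    | smul r m _ hm => simpa using hm.smul_right r
  induction y using CliffordAlgebra.induction with
  | algebraMap r => exact Algebra.commute_algebraMap_right r x
  | ι m => exact hι m
  | mul y z hy hz => exact hy.mul_right hz
  | add y z hy hz => exact hy.add_right hz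

theorem not_exists_isUnit_forall_ι_mul_mul_ι_eq_neg [Nontrivial R] [Invertible (2 : R)]
    (e : Fin 3 → M) (he : Submodule.span R (Set.range e) = ⊤)
    (ho : Pairwise fun i j => Q.IsOrtho (e i) (e j))
    (h₀ : Q (e 0) = 1) (h₁ : Q (e 1) = -1) (h₂ : Q (e 2) = -1) :
    ¬ ∃ U : CliffordAlgebra Q, IsUnit U ∧ ∀ a, ι Q (e a) * U * ι Q (e a) = -U := by
  rintro ⟨U, hU, hsandwich⟩
  have hanti {i j : Fin 3} (hij : i ≠ j) : ι Q (e j) * ι Q (e i) = -(ι Q (e i) * ι Q (e j)) :=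
    ι_mul_ι_comm_of_isOrtho (ho hij.symm)
  set ω := ι Q (e 0) * ι Q (e 1) * ι Q (e 2)
  have hω_central : ∀ y, Commute ω y := by
    refine commute_of_forall_commute_ι he ?_
    rintro _ ⟨i, rfl⟩
    fin_cases i
    exacts [commute_mul_mul_left_of_anticomm (hanti (by decide)) (hanti (by decide)),
      commute_mul_mul_middle_of_anticomm (hanti (by decide)) (hanti (by decide)),
      commute_mul_mul_right_of_anticomm (hanti (by decide)) (hanti (by decide))]
  have hω_anti : ω * U = -(U * ω) :=
    mul_mul_mul_eq_neg_of_anticomm_of_commute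
      (mul_eq_neg_mul_of_mul_mul_eq_neg (by rw [ι_sq_scalar, h₀, map_one]) (hsandwich 0))
      (commute_of_mul_mul_eq_neg (by rw [ι_sq_scalar, h₁, map_neg, map_one]) (hsandwich 1))
      (commute_of_mul_mul_eq_neg (by rw [ι_sq_scalar, h₂, map_neg, map_one]) (hsandwich 2))
  have hγ_unit (a : Fin 3) : IsUnit (ι Q (e a)) := by
    rw [isUnit_ι_iff]; fin_cases a <;> simp [h₀, h₁, h₂]
  have hω_unit : IsUnit ω := ((hγ_unit 0).mul (hγ_unit 1)).mul (hγ_unit 2)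
  have hωU : ω * U = 0 := eq_zero_of_commute_of_mul_eq_neg (R := R) (hω_central U) hω_anti
  exact not_isUnit_zero (hωU ▸ hω_unit.mul hU)

end CliffordAlgebra

namespace QuadraticMap

variable {ι R : Type*} [Fintype ι] [DecidableEq ι] [CommRing R]

theorem weightedSumSquares_single_one (w : ι → R) (i : ι) :
    weightedSumSquares R w (Pi.single i 1) = w i := by
  simp [Pi.single_apply]

theorem pairwise_isOrtho_weightedSumSquares_single_one (w : ι → R) :
    Pairwise fun i j => (weightedSumSquares R w).IsOrtho (Pi.single i 1) (Pi.single j 1) := by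
  intro i j hij
  rw [isOrtho_def, weightedSumSquares_single_one, weightedSumSquares_single_one,
    weightedSumSquares_apply, Fintype.sum_eq_add i j hij]
  · simp [hij, hij.symm]
  · rintro k ⟨hki, hkj⟩
    simp [hki, hkj]

end QuadraticMap

/-- In the real Clifford algebra of the Minkowski quadratic form of signature
`(1,2)` (generators `γ⁰, γ¹, γ²` with `(γ⁰)² = 1`, `(γ¹)² = (γ²)² = -1` and anticommuting),
there is no invertible element `U` with `γ^a U γ^a = -U` for all `a = 0, 1, 2`. -/
theorem stmt6 :
    ¬ ∃ U : CliffordAlgebra (QuadraticMap.weightedSumSquares ℝ (![1, -1, -1] : Fin 3 → ℝ)),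
      IsUnit U ∧ ∀ a : Fin 3,
        ι (QuadraticMap.weightedSumSquares ℝ (![1, -1, -1] : Fin 3 → ℝ)) (Pi.single a 1) * U *
          ι (QuadraticMap.weightedSumSquares ℝ (![1, -1, -1] : Fin 3 → ℝ)) (Pi.single a 1)
          = -U := by
  refine not_exists_isUnit_forall_ι_mul_mul_ι_eq_neg (fun a => Pi.single a 1) ?_
    (QuadraticMap.pairwise_isOrtho_weightedSumSquares_single_one _) ?_ ?_ ?_
  · rw [← (Pi.basisFun ℝ (Fin 3)).span_eq]
    congr
    ext a : 1
    exact (Pi.basisFun_apply ℝ (Fin 3) a).symm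
  all_goals rw [QuadraticMap.weightedSumSquares_single_one]; rfl
end

section
/- Let h be a closed real-linear subspace of a complex Hilbert space H that is standard (h + ih dense, h ∩ ih = {0}), with Tomita operator s(h' + ih'') = h' - ih'' and modular operator δ = s*s. If T is an antiunitary involution on H with T h = h, then T commutes with s and with δ (i.e. T δ = δ T on the domain of δ). -/
open scoped InnerProductSpace

/-- Let `h` be a closed standard real subspace of a complex Hilbert space `H`
(`h + ih` dense, `h ∩ ih = {0}`), with Tomita operator `s(h' + ih'') = h' - ih''` defined on
the domain `D = h + ih`, and modular operator `δ = s*s` (characterized on `D` by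
`⟪s x, s y⟫ = ⟪y, δ x⟫`).  If `T` is an antiunitary involution of `H` with `T h = h`,
then `T` commutes with `s` and with `δ` on `D`. -/
theorem stmt9 {H : Type*} [NormedAddCommGroup H] [InnerProductSpace ℂ H] [CompleteSpace H]
    (h : Submodule ℝ H) (hclosed : IsClosed (h : Set H))
    (D : Set H) (hD : D = {x : H | ∃ a ∈ h, ∃ b ∈ h, x = a + Complex.I • b})
    (hdense : Dense D)
    (hsep : ∀ a ∈ h, ∀ b ∈ h, a = Complex.I • b → a = 0)
    -- the Tomita operator `s` on its domain `D`
    (s : H → H) (hs : ∀ a ∈ h, ∀ b ∈ h, s (a + Complex.I • b) = a - Complex.I • b)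
    -- the modular operator `δ = s* s`, characterized via the quadratic form of `s`
    (δ : H → H) (hδD : ∀ x ∈ D, δ x ∈ D)
    (hδ : ∀ x ∈ D, ∀ y ∈ D, ⟪s x, s y⟫_ℂ = ⟪y, δ x⟫_ℂ)
    -- `T` is an antiunitary involution preserving `h`
    (T : H → H) (hTadd : ∀ x y, T (x + y) = T x + T y)
    (hTsmul : ∀ (c : ℂ) (x : H), T (c • x) = (starRingEnd ℂ) c • T x)
    (hTinner : ∀ x y, ⟪T x, T y⟫_ℂ = ⟪y, x⟫_ℂ)
    (hTsq : ∀ x, T (T x) = x)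
    (hTh : T '' (h : Set H) = (h : Set H)) :
    (∀ x ∈ D, T (s x) = s (T x)) ∧ (∀ x ∈ D, T (δ x) = δ (T x)) := by
  have hTmem : ∀ a ∈ h, T a ∈ h := by
    intro a ha
    have : T a ∈ T '' (h : Set H) := ⟨a, ha, rfl⟩
    rwa [hTh] at this
  have hTneg : ∀ v : H, T (-v) = -T v := by
    intro v
    have := hTsmul (-1) v
    simpa using this
  have hTeq : ∀ a ∈ h, ∀ b ∈ h,
      T (a + Complex.I • b) = T a + Complex.I • (-(T b)) := by
    intro a ha b hb
    rw [hTadd, hTsmul, Complex.conj_I, neg_smul, smul_neg]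
  have hTD : ∀ x ∈ D, T x ∈ D := by
    intro x hx
    rw [hD] at hx ⊢
    obtain ⟨a, ha, b, hb, rfl⟩ := hx
    exact ⟨T a, hTmem a ha, -(T b), h.neg_mem (hTmem b hb), hTeq a ha b hb⟩
  have hTs : ∀ x ∈ D, T (s x) = s (T x) := by
    intro x hx
    rw [hD] at hx
    obtain ⟨a, ha, b, hb, rfl⟩ := hx
    rw [hs a ha b hb, hTeq a ha b hb,
      hs (T a) (hTmem a ha) (-(T b)) (h.neg_mem (hTmem b hb)),
      sub_eq_add_neg, hTadd, hTneg, hTsmul, Complex.conj_I, neg_smul, neg_neg,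
      smul_neg, sub_neg_eq_add]
  refine ⟨hTs, ?_⟩
  have hTswap : ∀ u v : H, ⟪T u, v⟫_ℂ = ⟪T v, u⟫_ℂ := by
    intro u v
    calc ⟪T u, v⟫_ℂ = ⟪T u, T (T v)⟫_ℂ := by rw [hTsq]
    _ = ⟪T v, u⟫_ℂ := hTinner u (T v)
  intro x hx
  have hTx : T x ∈ D := hTD x hx
  set w : H := δ (T x) - T (δ x) with hw
  have hkey : ∀ y ∈ D, ⟪y, w⟫_ℂ = 0 := by
    intro y hy
    have c1 : ⟪y, δ (T x)⟫_ℂ = ⟪y, T (δ x)⟫_ℂ := by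
      calc ⟪y, δ (T x)⟫_ℂ = ⟪s (T x), s y⟫_ℂ := (hδ (T x) hTx y hy).symm
      _ = ⟪T (s x), s y⟫_ℂ := by rw [hTs x hx]
      _ = ⟪T (s y), s x⟫_ℂ := hTswap _ _
      _ = ⟪s (T y), s x⟫_ℂ := by rw [hTs y hy]
      _ = (starRingEnd ℂ) ⟪s x, s (T y)⟫_ℂ := (inner_conj_symm _ _).symm
      _ = (starRingEnd ℂ) ⟪T y, δ x⟫_ℂ := by rw [hδ x hx (T y) (hTD y hy)]
      _ = ⟪δ x, T y⟫_ℂ := inner_conj_symm _ _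
      _ = ⟪T (T y), T (δ x)⟫_ℂ := (hTinner (T y) (δ x)).symm
      _ = ⟪y, T (δ x)⟫_ℂ := by rw [hTsq]
    rw [hw, inner_sub_right, c1, sub_self]
  have hall : ∀ y : H, ⟪y, w⟫_ℂ = 0 := by
    have hc1 : Continuous fun y : H => ⟪y, w⟫_ℂ := continuous_inner.comp (continuous_id.prodMk continuous_const)
    have := Continuous.ext_on hdense hc1 continuous_const (fun y hy => hkey y hy)
    intro y
    exact congrFun this y
  have : w = 0 := by
    have := hall w
    rwa [inner_self_eq_zero] at this
  have := sub_eq_zero.mp this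
  exact this.symm
end
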